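/- For the Lorenz 63 system with σ, ρ, β > 0, the function V(x,y,z) = ρx² + σy² + σ(z − 2ρ)² satisfies dV/dt along trajectories equal to −2σ(ρx² + y² + βz² − 2βρz), and consequently dV/dt < 0 whenever ρx² + y² + β(z − ρ)² > βρ²; hence all trajectories eventually enter and remain in a bounded set. -/

import Mathlib

/-! Differentiating `V` along the flow, the cross terms in `xy` and `xyz` cancel, leaving
`-2σ(ρx² + y² + βz² - 2βρz)`. Completing the square in `z` rewrites the bracket as
`ρx² + y² + β(z - ρ)² - βρ²`, which is positive outside the ellipsoid. -/

theorem hasDerivAt_lorenz63_lyapunov {σ ρ β t : ℝ} {x y z : ℝ → ℝ}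
    (hx : HasDerivAt x (σ * (y t - x t)) t)
    (hy : HasDerivAt y (x t * (ρ - z t) - y t) t)
    (hz : HasDerivAt z (x t * y t - β * z t) t) :
    HasDerivAt (fun s => ρ * x s ^ 2 + σ * y s ^ 2 + σ * (z s - 2 * ρ) ^ 2)
      (-2 * σ * (ρ * x t ^ 2 + y t ^ 2 + β * z t ^ 2 - 2 * β * ρ * z t)) t := by
  have hV := ((hx.fun_pow 2).const_mul ρ).add ((hy.fun_pow 2).const_mul σ) |>.add
    (((hz.sub_const (2 * ρ)).fun_pow 2).const_mul σ)
  refine hV.congr_deriv ?_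
  ring

theorem lorenz63_dissipation_neg {σ ρ β a b c : ℝ} (hσ : 0 < σ)
    (h : ρ * a ^ 2 + b ^ 2 + β * (c - ρ) ^ 2 > β * ρ ^ 2) :
    -2 * σ * (ρ * a ^ 2 + b ^ 2 + β * c ^ 2 - 2 * β * ρ * c) < 0 := by
  have hpos : 0 < ρ * a ^ 2 + b ^ 2 + β * c ^ 2 - 2 * β * ρ * c := by linarith
  exact mul_neg_of_neg_of_pos (by linarith) hpos

theorem lorenz63_lyapunov_general (σ ρ β : ℝ) (hσ : 0 < σ)
    (x y z : ℝ → ℝ)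
    (hx : ∀ t, HasDerivAt x (σ * (y t - x t)) t)
    (hy : ∀ t, HasDerivAt y (x t * (ρ - z t) - y t) t)
    (hz : ∀ t, HasDerivAt z (x t * y t - β * z t) t) :
    ∀ t : ℝ,
      HasDerivAt (fun s => ρ * x s ^ 2 + σ * y s ^ 2 + σ * (z s - 2 * ρ) ^ 2)
        (-2 * σ * (ρ * x t ^ 2 + y t ^ 2 + β * z t ^ 2 - 2 * β * ρ * z t)) t ∧
      (ρ * x t ^ 2 + y t ^ 2 + β * (z t - ρ) ^ 2 > β * ρ ^ 2 →
        -2 * σ * (ρ * x t ^ 2 + y t ^ 2 + β * z t ^ 2 - 2 * β * ρ * z t) < 0) :=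
  fun t => ⟨hasDerivAt_lorenz63_lyapunov (hx t) (hy t) (hz t), lorenz63_dissipation_neg hσ⟩

/-- For Lorenz 63 with `σ, ρ, β > 0`, the Lyapunov function
`V = ρx² + σy² + σ(z - 2ρ)²` satisfies
`dV/dt = -2σ(ρx² + y² + βz² - 2βρz)` along trajectories, and `dV/dt < 0`
whenever `ρx² + y² + β(z-ρ)² > βρ²`. -/
theorem lorenz63_lyapunov (σ ρ β : ℝ) (hσ : 0 < σ) (hρ : 0 < ρ) (hβ : 0 < β)
    (x y z : ℝ → ℝ)
    (hx : ∀ t, HasDerivAt x (σ * (y t - x t)) t)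
    (hy : ∀ t, HasDerivAt y (x t * (ρ - z t) - y t) t)
    (hz : ∀ t, HasDerivAt z (x t * y t - β * z t) t) :
    ∀ t : ℝ,
      HasDerivAt (fun s => ρ * x s ^ 2 + σ * y s ^ 2 + σ * (z s - 2 * ρ) ^ 2)
        (-2 * σ * (ρ * x t ^ 2 + y t ^ 2 + β * z t ^ 2 - 2 * β * ρ * z t)) t ∧
      (ρ * x t ^ 2 + y t ^ 2 + β * (z t - ρ) ^ 2 > β * ρ ^ 2 →
        -2 * σ * (ρ * x t ^ 2 + y t ^ 2 + β * z t ^ 2 - 2 * β * ρ * z t) < 0) :=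
  lorenz63_lyapunov_general σ ρ β hσ x y z hx hy hz
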